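/- arXiv:2310.09113 — 2 statements merged into one kernel-verified Lean document; each statement's English description precedes it below -/
import Mathlib

section
/- Let π : (T₁,m₁) → (T₂,m₂) be a flow submersion and let x ∈ T₁. Then for every z ∈ T₂ with z ≤ π(x), one has m₂(z) = c(x) · Σ_{y ∈ T₁ : y ≤ x and π(y) = z} m₁(y), where c(x) = m₂(π(x))/m₁(x). In other words, the restriction of m₂ to the set of descendants of π(x) is c(x) times the push-forward via π of the restriction of m₁ to the set of descendants of x. -/
open scoped ENNReal NNReal
open MeasureTheory Filter

namespace Flow

/-- A tree with root at infinity: a set with a predecessor map, no cycles,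
joint ancestors, and finitely many successors at each vertex. -/
structure RootedTree (T : Type*) where
  pred : T → T
  no_cycle : ∀ (x : T) (k : ℕ), 1 ≤ k → pred^[k] x ≠ x
  connected : ∀ x y : T, ∃ k l : ℕ, pred^[k] x = pred^[l] y
  succ_finite : ∀ x : T, {y : T | pred y = x}.Finite

variable {T T₁ T₂ : Type*}

/-- The graph distance on a tree with root at infinity. -/
noncomputable def RootedTree.dist (t : RootedTree T) (x y : T) : ℕ :=
  sInf {n : ℕ | ∃ k l : ℕ, k + l = n ∧ t.pred^[k] x = t.pred^[l] y}

/-- The partial order: `x ≤ y` iff `y` is an ancestor of `x`. -/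
def RootedTree.le (t : RootedTree T) (x y : T) : Prop :=
  ∃ k : ℕ, t.pred^[k] x = y

def RootedTree.lt (t : RootedTree T) (x y : T) : Prop :=
  t.le x y ∧ x ≠ y

/-- A flow measure on a tree with root at infinity. -/
structure IsFlowMeasure (t : RootedTree T) (m : T → ℝ) : Prop where
  pos : ∀ x, 0 < m x
  flow : ∀ x, m x = ∑' y : {y : T // t.pred y = x}, m (y : T)

/-- A level function on a tree with root at infinity. -/
def IsLevel (t : RootedTree T) (lev : T → ℤ) : Prop :=
  ∀ x : T, lev (t.pred x) = lev x + 1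

/-- A homogeneous tree where every vertex has exactly `q` successors. -/
def IsHomogeneous (t : RootedTree T) (q : ℕ) : Prop :=
  ∀ x : T, {y : T | t.pred y = x}.ncard = q

/-- The canonical flow measure `q ^ ℓ(x)` on the homogeneous tree of index `q`. -/
noncomputable def canonicalFlow (q : ℕ) (lev : T → ℤ) : T → ℝ :=
  fun x => (q : ℝ) ^ (lev x)

/-- A `q`-uniformly rational flow measure. -/
def UniformlyRational (t : RootedTree T) (m : T → ℝ) (q : ℕ) : Prop :=
  ∀ x : T, ∃ n : ℕ, 0 < n ∧ (q : ℝ) * m x = (n : ℝ) * m (t.pred x)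

/-- The `L^p(m)` norm of a function on a flow tree, `p ∈ [1,∞]`. -/
noncomputable def lpNorm (m : T → ℝ) (p : ℝ≥0∞) (f : T → ℂ) : ℝ≥0∞ :=
  if p = ∞ then ⨆ x : T, (‖f x‖₊ : ℝ≥0∞)
  else (∑' x : T, (‖f x‖₊ : ℝ≥0∞) ^ p.toReal * ENNReal.ofReal (m x)) ^ (1 / p.toReal)

/-- The measure of a subset of a flow tree. -/
noncomputable def setMass (m : T → ℝ) (S : Set T) : ℝ≥0∞ :=
  ∑' x : S, ENNReal.ofReal (m (x : T))

/-- Boundedness of an operator on `L^p(m)`. -/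
def BoundedOnLp (m : T → ℝ) (p : ℝ≥0∞) (O : (T → ℂ) → (T → ℂ)) : Prop :=
  ∃ C : ℝ, 0 < C ∧ ∀ f : T → ℂ, lpNorm m p f < ∞ →
    lpNorm m p (O f) ≤ ENNReal.ofReal C * lpNorm m p f

/-- Boundedness on `L^p(m)` of an operator defined on `L²(m) ∩ L^p(m)`. -/
def BoundedOnLp₂ (m : T → ℝ) (p : ℝ≥0∞) (O : (T → ℂ) → (T → ℂ)) : Prop :=
  ∃ C : ℝ, 0 < C ∧ ∀ f : T → ℂ, lpNorm m 2 f < ∞ → lpNorm m p f < ∞ →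
    lpNorm m p (O f) ≤ ENNReal.ofReal C * lpNorm m p f

/-- The `L^p → L^p` operator norm (supremum over the unit ball). -/
noncomputable def opNormLp (m : T → ℝ) (p : ℝ≥0∞) (O : (T → ℂ) → (T → ℂ)) : ℝ≥0∞ :=
  ⨆ f : {f : T → ℂ // lpNorm m p f ≤ 1}, lpNorm m p (O f.1)

/-- The `L^p → L^p` operator norm of an operator defined on `L²(m) ∩ L^p(m)`. -/
noncomputable def opNormLp₂ (m : T → ℝ) (p : ℝ≥0∞) (O : (T → ℂ) → (T → ℂ)) : ℝ≥0∞ :=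
  ⨆ f : {f : T → ℂ // lpNorm m 2 f < ∞ ∧ lpNorm m p f ≤ 1}, lpNorm m p (O f.1)

/-- The flow measure `m` is locally doubling. -/
def LocallyDoubling (t : RootedTree T) (m : T → ℝ) : Prop :=
  ∀ R : ℝ, 0 < R → ∃ D : ℝ, 0 < D ∧ ∀ (x : T) (r : ℝ), 0 < r → r ≤ R →
    setMass m {y : T | (t.dist x y : ℝ) ≤ 2 * r} ≤
      ENNReal.ofReal D * setMass m {y : T | (t.dist x y : ℝ) ≤ r}

/-- The shift operator `Σ f (x) = f(𝔭(x))`. -/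
noncomputable def shiftOp (t : RootedTree T) (f : T → ℂ) : T → ℂ :=
  fun x => f (t.pred x)

/-- The adjoint shift `Σ* f (x) = m(x)⁻¹ Σ_{y ∈ succ(x)} f(y) m(y)`. -/
noncomputable def shiftStarOp (t : RootedTree T) (m : T → ℝ) (f : T → ℂ) : T → ℂ :=
  fun x => ((m x : ℂ))⁻¹ * ∑' y : {y : T // t.pred y = x}, f (y : T) * ((m (y : T) : ℂ))

/-- The flow gradient `∇ = I - Σ`. -/
noncomputable def gradOp (t : RootedTree T) (f : T → ℂ) : T → ℂ :=
  fun x => f x - f (t.pred x)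

/-- The adjoint flow gradient `∇* = I - Σ*`. -/
noncomputable def gradStarOp (t : RootedTree T) (m : T → ℝ) (f : T → ℂ) : T → ℂ :=
  fun x => f x - shiftStarOp t m f x

/-- The flow Laplacian `𝓛 = I - (Σ + Σ*)/2`. -/
noncomputable def lapOp (t : RootedTree T) (m : T → ℝ) (f : T → ℂ) : T → ℂ :=
  fun x => f x - (shiftOp t f x + shiftStarOp t m f x) / 2

/-- The heat semigroup `e^{-s𝓛}`, given by the exponential power series. -/
noncomputable def heatOp (t : RootedTree T) (m : T → ℝ) (s : ℝ) (f : T → ℂ) : T → ℂ :=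
  fun x => ∑' k : ℕ, ((-(s : ℂ)) ^ k / (Nat.factorial k : ℂ)) * ((lapOp t m)^[k] f) x

/-- The integral kernel of an operator: `K_O(x,y) = O(𝟙_{y})(x) / m(y)`. -/
noncomputable def opKernel (m : T → ℝ) (O : (T → ℂ) → (T → ℂ)) (x y : T) : ℂ :=
  O (Set.indicator {y} fun _ => (1 : ℂ)) x / (m y : ℂ)

/-- The (formal) adjoint of an operator, given by the conjugate-transpose kernel. -/
noncomputable def adjointOp (m : T → ℝ) (O : (T → ℂ) → (T → ℂ)) (f : T → ℂ) : T → ℂ :=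
  fun x => ∑' y : T, (starRingEnd ℂ) (opKernel m O y x) * f y * ((m y : ℂ))

/-- A polynomial applied to an operator. -/
noncomputable def polyApply (L : (T → ℂ) → (T → ℂ)) (P : Polynomial ℂ) (f : T → ℂ) : T → ℂ :=
  fun x => ∑ i ∈ Finset.range (P.natDegree + 1), P.coeff i * (L^[i] f) x

/-- `B` is the continuous functional calculus `F(L)` of the self-adjoint operator `L`
(whose spectrum is contained in `[0,2]`): `B` is approximated on `L²(m)` by polynomials
in `L`, with operator-norm error controlled by the sup-norm error on `[0,2]`. -/
def IsCfcOf (m : T → ℝ) (L : (T → ℂ) → (T → ℂ)) (F : ℝ → ℂ)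
    (B : (T → ℂ) → (T → ℂ)) : Prop :=
  ∀ ε : ℝ, 0 < ε → ∃ P : Polynomial ℂ,
    (∀ lam : ℝ, lam ∈ Set.Icc (0 : ℝ) 2 → ‖F lam - P.eval (lam : ℂ)‖ ≤ ε) ∧
    ∀ f : T → ℂ, lpNorm m 2 f < ∞ →
      lpNorm m 2 (fun x => B f x - polyApply L P f x) ≤ ENNReal.ofReal ε * lpNorm m 2 f

/-- `Φ` is the Borel functional calculus of the self-adjoint operator `L` with spectrum
in `[0,2]`: it agrees with the continuous functional calculus on continuous functions and
satisfies dominated convergence (bounded pointwise convergence on `[0,2]` implies strong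
convergence on `L²(m)`). These properties determine `Φ F` uniquely on `L²(m)` for every
bounded Borel `F`. -/
structure IsBorelFC (m : T → ℝ) (L : (T → ℂ) → (T → ℂ))
    (Φ : (ℝ → ℂ) → (T → ℂ) → (T → ℂ)) : Prop where
  cfc_agree : ∀ F : ℝ → ℂ, ContinuousOn F (Set.Icc 0 2) → IsCfcOf m L F (Φ F)
  dominated : ∀ (Fs : ℕ → ℝ → ℂ) (F : ℝ → ℂ) (C : ℝ),
    (∀ n, Measurable (Fs n)) → Measurable F →
    (∀ n, ∀ lam ∈ Set.Icc (0 : ℝ) 2, ‖Fs n lam‖ ≤ C) →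
    (∀ lam ∈ Set.Icc (0 : ℝ) 2, Tendsto (fun n => Fs n lam) atTop (nhds (F lam))) →
    ∀ f : T → ℂ, lpNorm m 2 f < ∞ →
      Tendsto (fun n => lpNorm m 2 (fun x => Φ (Fs n) f x - Φ F f x)) atTop (nhds 0)

/-- The truncated Riesz transform `∇ F_N(𝓛)`, where
`F_N(s) = π^{-1/2} ∫₀^N e^{-ts} t^{-1/2} dt`. -/
noncomputable def rieszApprox (t : RootedTree T) (m : T → ℝ) (N : ℕ) (f : T → ℂ) : T → ℂ :=
  fun x => (Real.sqrt Real.pi)⁻¹ •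
    ∫ u in Set.Ioc (0 : ℝ) (N : ℝ), (Real.sqrt u)⁻¹ • gradOp t (heatOp t m u f) x

/-- `g = R f`, where the Riesz transform `R = ∇ 𝓛^{-1/2}` is the limit of the truncated
Riesz transforms `∇ F_N(𝓛)` in the strong operator topology of `L²(m)`. -/
def IsRieszOf (t : RootedTree T) (m : T → ℝ) (f g : T → ℂ) : Prop :=
  Tendsto (fun N : ℕ => lpNorm m 2 (fun x => rieszApprox t m N f x - g x)) atTop (nhds 0)

/-- The integral kernel of the Riesz transform:
`K_R(x,y) = π^{-1/2} ∫₀^∞ K_{∇ e^{-u𝓛}}(x,y) u^{-1/2} du`. -/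
noncomputable def rieszKernel (t : RootedTree T) (m : T → ℝ) (x y : T) : ℂ :=
  (Real.sqrt Real.pi)⁻¹ •
    ∫ u in Set.Ioi (0 : ℝ),
      (Real.sqrt u)⁻¹ • opKernel m (fun f => gradOp t (heatOp t m u f)) x y

/-- The convolution kernel `k̃_ℤ(n) = (2√2/π) n/(n² - 1/4)` of the skew-symmetric part of
the discrete Hilbert transform. -/
noncomputable def ktZ (n : ℤ) : ℂ :=
  ((2 * Real.sqrt 2 / Real.pi : ℝ) : ℂ) * (n : ℂ) / ((n : ℂ) ^ 2 - 1 / 4)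

/-- `lam` belongs to the resolvent set of the flow Laplacian on `L^p(m)`:
`lam - 𝓛` has a bounded two-sided inverse on `L^p(m)`. -/
def InResolvent (t : RootedTree T) (m : T → ℝ) (p : ℝ≥0∞) (lam : ℂ) : Prop :=
  ∃ B : (T → ℂ) → (T → ℂ), BoundedOnLp m p B ∧
    (∀ f : T → ℂ, lpNorm m p f < ∞ →
      B (fun x => lam * f x - lapOp t m f x) = f) ∧
    (∀ f : T → ℂ, lpNorm m p f < ∞ →
      (fun x => lam * B f x - lapOp t m (B f) x) = f)

/-- A submersion between trees with root at infinity. -/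
structure IsSubmersion (t₁ : RootedTree T₁) (t₂ : RootedTree T₂) (π : T₁ → T₂) : Prop where
  map_pred : ∀ x : T₁, π (t₁.pred x) = t₂.pred (π x)
  map_succ : ∀ x : T₁, π '' {y : T₁ | t₁.pred y = x} = {z : T₂ | t₂.pred z = π x}

/-- `π`-compatibility of the flow measures `m₁`, `m₂`:
`m₂(π x)/m₂(𝔭(π x)) = m₁(π⁻¹{π x} ∩ succ(𝔭 x))/m₁(𝔭 x)`. -/
def FlowCompatible (t₁ : RootedTree T₁) (t₂ : RootedTree T₂) (π : T₁ → T₂)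
    (m₁ : T₁ → ℝ) (m₂ : T₂ → ℝ) : Prop :=
  ∀ x : T₁,
    m₂ (π x) / m₂ (t₂.pred (π x)) =
      (∑' y : {y : T₁ // π y = π x ∧ t₁.pred y = t₁.pred x}, m₁ (y : T₁)) / m₁ (t₁.pred x)

/-- `O'` witnesses `π`-compatibility of `O`: `O Φ_π = Φ_π O'` and `O* Φ_π = Φ_π O'*`
on `L^∞(m₂)`, where `Φ_π f = f ∘ π` is the lifting operator. -/
def CompatiblePair (t₁ : RootedTree T₁) (t₂ : RootedTree T₂) (π : T₁ → T₂)
    (m₁ : T₁ → ℝ) (m₂ : T₂ → ℝ)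
    (O : (T₁ → ℂ) → (T₁ → ℂ)) (O' : (T₂ → ℂ) → (T₂ → ℂ)) : Prop :=
  (∀ f : T₂ → ℂ, lpNorm m₂ ∞ f < ∞ → O (f ∘ π) = (O' f) ∘ π) ∧
  (∀ f : T₂ → ℂ, lpNorm m₂ ∞ f < ∞ →
    adjointOp m₁ O (f ∘ π) = (adjointOp m₂ O' f) ∘ π)

/-- The squared Sobolev norm `∫ (1+ξ²)^s |G(ξ)|² dξ`, applied to the Fourier transform `G`
of the function under consideration. -/
noncomputable def sobolevWeight (s : ℝ) (G : ℝ → ℂ) : ℝ≥0∞ :=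
  ∫⁻ ξ : ℝ, ENNReal.ofReal ((1 + ξ ^ 2) ^ s) * (‖G ξ‖₊ : ℝ≥0∞) ^ 2

/-- The Sobolev norm `(∫ (1+ξ²)^s |G(ξ)|² dξ)^{1/2}`. -/
noncomputable def sobolevNorm (s : ℝ) (G : ℝ → ℂ) : ℝ≥0∞ :=
  sobolevWeight s G ^ (1 / 2 : ℝ)

/-- `G` is the (distributional) Fourier transform of `F`, characterised by duality
against Schwartz functions. -/
def FourierCoupled (F G : ℝ → ℂ) : Prop :=
  ∀ φ : SchwartzMap ℝ ℂ,
    (∫ x : ℝ, F x * FourierTransform.fourier (fun y : ℝ => φ y) x) = ∫ ξ : ℝ, G ξ * φ ξ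

/-- The coefficients `g_F(n) = -(i/π) ∫_{-π}^{π} sin θ · F(1-cos θ) e^{inθ} dθ`,
i.e. `∇̃_ℤ k_{F(Δ_ℤ)}(n)` when `F` is bounded Borel on `[0,2]`. -/
noncomputable def gCoef (F : ℝ → ℂ) (n : ℤ) : ℂ :=
  (-(Complex.I / (Real.pi : ℂ))) *
    ∫ θ in Set.Ioc (-Real.pi) Real.pi,
      ((Real.sin θ : ℂ)) * F (1 - Real.cos θ) * Complex.exp ((n : ℂ) * (θ : ℂ) * Complex.I)

lemma predZ_iter (k : ℕ) (n : ℤ) : (fun n : ℤ => n + 1)^[k] n = n + k := by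
  induction k generalizing n with
  | zero => simp
  | succ k ih =>
      rw [Function.iterate_succ_apply, ih]
      push_cast
      ring

/-- `ℤ` as a tree with root at infinity (`𝔭(n) = n+1`); together with the flow measure
`mZ ≡ 1` this is the homogeneous flow tree `T₁`, whose flow Laplacian is the discrete
Laplacian `Δ_ℤ`. -/
noncomputable def treeZ : RootedTree ℤ where
  pred n := n + 1
  no_cycle x k hk := by rw [predZ_iter]; omega
  connected x y := ⟨(y - x).toNat, (x - y).toNat, by rw [predZ_iter, predZ_iter]; omega⟩
  succ_finite x := (Set.finite_singleton (x - 1)).subset (by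
    intro y hy
    simp only [Set.mem_setOf_eq] at hy
    simp only [Set.mem_singleton_iff]
    omega)

/-- The counting flow measure on `ℤ`. -/
def mZ : ℤ → ℝ := fun _ => 1

/-- The convolution kernel of a translation-invariant operator on `ℤ`: `k_B = B δ₀`. -/
noncomputable def kZker (B : (ℤ → ℂ) → (ℤ → ℂ)) (n : ℤ) : ℂ :=
  B (Set.indicator {0} fun _ => (1 : ℂ)) n

end Flow

/-! Compatibility says that if `z` is a successor of `π y`, the successors of `y` lying over `z`
carry the fraction `m₂ z / m₂ (π y)` of `m₁ y`. Iterating this over the `k` generations between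
`z` and `π x`, the descendants of `x` of depth `k` lying over `z` carry the fraction
`m₂ z / m₂ (π x)` of `m₁ x`. These are all the descendants of `x` over `z`: `π` preserves the
depth `k` with `𝔭^k y = x`, and depth is well defined because `𝔭` has no cycles. -/

open Function

theorem tsum_subtype_eq_finsum_mem {α M : Type*} [AddCommMonoid M] [TopologicalSpace M]
    {s : Set α} (hs : s.Finite) (f : α → M) : ∑' a : s, f a = ∑ᶠ a ∈ s, f a := by
  have := hs.to_subtype
  rw [tsum_eq_finsum (Set.toFinite _), finsum_set_coe_eq_finsum_mem]

namespace Flow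

namespace RootedTree

variable {T : Type*} (t : RootedTree T)

theorem iterate_pred_injective (z : T) : Injective fun k => t.pred^[k] z := by
  intro j k h
  wlog hjk : j ≤ k generalizing j k
  · exact (this h.symm (le_of_not_ge hjk)).symm
  by_contra hne
  refine t.no_cycle (t.pred^[j] z) (k - j) (by omega) ?_
  rw [← iterate_add_apply, Nat.sub_add_cancel hjk]
  exact h.symm

theorem finite_iterate_pred_preimage (k : ℕ) (x : T) : {y | t.pred^[k] y = x}.Finite := by
  induction k generalizing x with
  | zero => simp
  | succ k ih =>
    simp only [iterate_succ_apply]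
    exact (ih x).preimage' fun y _ => t.succ_finite y

end RootedTree

namespace IsSubmersion

variable {T₁ T₂ : Type*} {t₁ : RootedTree T₁} {t₂ : RootedTree T₂} {π : T₁ → T₂}

theorem map_iterate_pred (hsub : IsSubmersion t₁ t₂ π) (k : ℕ) (y : T₁) :
    π (t₁.pred^[k] y) = t₂.pred^[k] (π y) :=
  Semiconj.iterate_right hsub.map_pred k y

theorem iterate_pred_eq_of_le (hsub : IsSubmersion t₁ t₂ π) {x y : T₁} (hyx : t₁.le y x)
    {k : ℕ} (hk : t₂.pred^[k] (π y) = π x) : t₁.pred^[k] y = x := by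
  obtain ⟨j, rfl⟩ := hyx
  rw [t₂.iterate_pred_injective (π y) (hk.trans (hsub.map_iterate_pred j y))]

variable {m₁ : T₁ → ℝ} {m₂ : T₂ → ℝ}

theorem finsum_succ_fiber (hsub : IsSubmersion t₁ t₂ π) (hcomp : FlowCompatible t₁ t₂ π m₁ m₂)
    {y : T₁} (hy : m₁ y ≠ 0) {z : T₂} (hz : t₂.pred z = π y) :
    ∑ᶠ w ∈ {w | π w = z ∧ t₁.pred w = y}, m₁ w = m₂ z / m₂ (t₂.pred z) * m₁ y := by
  obtain ⟨w, hw, rfl⟩ : z ∈ π '' {w | t₁.pred w = y} := by rw [hsub.map_succ]; exact hz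
  have h := hcomp w
  rw [show t₁.pred w = y from hw] at h
  rw [← tsum_subtype_eq_finsum_mem ((t₁.succ_finite y).subset fun _ hv => hv.2)]
  exact ((eq_div_iff hy).mp h).symm

theorem finsum_fiber_iterate_pred (hsub : IsSubmersion t₁ t₂ π)
    (hcomp : FlowCompatible t₁ t₂ π m₁ m₂) (hm₁ : ∀ y, m₁ y ≠ 0) (hm₂ : ∀ z, m₂ z ≠ 0)
    (x : T₁) (k : ℕ) {z : T₂} (hz : t₂.pred^[k] z = π x) :
    ∑ᶠ y ∈ {y | t₁.pred^[k] y = x ∧ π y = z}, m₁ y = m₂ z / m₂ (π x) * m₁ x := by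
  induction k generalizing z with
  | zero =>
    obtain rfl : z = π x := hz
    have hset : {y | t₁.pred^[0] y = x ∧ π y = π x} = {x} := by
      ext y
      simp only [iterate_zero, id, Set.mem_ofPred_eq, Set.mem_singleton_iff]
      exact ⟨And.left, fun h => ⟨h, h ▸ rfl⟩⟩
    rw [hset, finsum_mem_singleton, div_self (hm₂ _), one_mul]
  | succ k ih =>
    rw [iterate_succ_apply] at hz
    have hunion : {y | t₁.pred^[k + 1] y = x ∧ π y = z} =
        ⋃ y' ∈ {y | t₁.pred^[k] y = x ∧ π y = t₂.pred z}, {w | π w = z ∧ t₁.pred w = y'} := by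
      ext w
      simp only [iterate_succ_apply, Set.mem_ofPred_eq, Set.mem_iUnion, exists_prop]
      constructor
      · rintro ⟨hw, rfl⟩
        exact ⟨t₁.pred w, ⟨hw, hsub.map_pred w⟩, rfl, rfl⟩
      · rintro ⟨_, ⟨hy', -⟩, rfl, rfl⟩
        exact ⟨hy', rfl⟩
    have hdisj : ({y | t₁.pred^[k] y = x ∧ π y = t₂.pred z} : Set T₁).PairwiseDisjoint
        fun y' => {w | π w = z ∧ t₁.pred w = y'} := fun _ _ _ _ hne =>
      Set.disjoint_left.mpr fun _ h₁ h₂ => hne (h₁.2.symm.trans h₂.2)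
    rw [hunion, finsum_mem_biUnion hdisj
        ((t₁.finite_iterate_pred_preimage k x).subset fun _ hy => hy.1)
        fun y' _ => (t₁.succ_finite y').subset fun _ hw => hw.2,
      finsum_mem_congr rfl fun y' hy' => hsub.finsum_succ_fiber hcomp (hm₁ y') hy'.2.symm,
      ← mul_finsum_mem, ih hz]
    field_simp [hm₂ (t₂.pred z)]

end IsSubmersion

end Flow

/-- Push-forward property of flow submersions: if
`π : (T₁,m₁) → (T₂,m₂)` is a flow submersion and `x ∈ T₁`, then for every `z ≤ π(x)`,
`m₂(z) = c(x) · Σ_{y ≤ x, π(y) = z} m₁(y)` where `c(x) = m₂(π(x))/m₁(x)`. -/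
theorem flow_submersion_pushforward {T₁ T₂ : Type*}
    (t₁ : Flow.RootedTree T₁) (t₂ : Flow.RootedTree T₂)
    (m₁ : T₁ → ℝ) (m₂ : T₂ → ℝ)
    (hm₁ : Flow.IsFlowMeasure t₁ m₁) (hm₂ : Flow.IsFlowMeasure t₂ m₂)
    (π : T₁ → T₂) (hsub : Flow.IsSubmersion t₁ t₂ π)
    (hcomp : Flow.FlowCompatible t₁ t₂ π m₁ m₂) (x : T₁) :
    ∀ z : T₂, t₂.le z (π x) →
      m₂ z = (m₂ (π x) / m₁ x) * ∑' y : {y : T₁ // t₁.le y x ∧ π y = z}, m₁ (y : T₁) := by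
  rintro z ⟨k, hk⟩
  have hfiber : {y | t₁.le y x ∧ π y = z} = {y | t₁.pred^[k] y = x ∧ π y = z} := by
    ext y
    exact ⟨fun ⟨hyx, hy⟩ => ⟨hsub.iterate_pred_eq_of_le hyx (hy ▸ hk), hy⟩,
      fun ⟨hy, hy'⟩ => ⟨⟨k, hy⟩, hy'⟩⟩
  have hfin : {y | t₁.pred^[k] y = x ∧ π y = z}.Finite :=
    (t₁.finite_iterate_pred_preimage k x).subset fun _ hy => hy.1
  change m₂ z = _ * ∑' y : {y | t₁.le y x ∧ π y = z}, m₁ y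
  rw [hfiber, tsum_subtype_eq_finsum_mem hfin,
    hsub.finsum_fiber_iterate_pred hcomp (fun y => (hm₁.pos y).ne') (fun z => (hm₂.pos z).ne')
      x k hk]
  field_simp [(hm₁.pos x).ne', (hm₂.pos (π x)).ne']
end

section
/- Let q ≥ 2 be an integer and let F ∈ C([0,2]). Then for all x, y ∈ T_q, the integral kernel of F(𝓛_{T_q}) satisfies K_{F(𝓛_{T_q})}(x,y) = q^{−(ℓ(x)+ℓ(y))/2} E_F(d(x,y)), where for k ∈ ℕ, E_F(k) = Σ_{j≥0} q^{−(k+2j)/2} ( k_{F(Δ_ℤ)}(k+2j) − k_{F(Δ_ℤ)}(k+2j+2) ), the series converging absolutely. -/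
open scoped ENNReal NNReal
open MeasureTheory Filter

/-!
Functions of the form `x ↦ √q ^ (ℓ(y) - ℓ(x)) * g(d(x,y))` are preserved by `𝓛_{T_q}`, which
acts on the profile `g` by a three-term recurrence (`radialLap`). The inverse Abel transform
`E f(k) = Σ_j q^{-(k+2j)/2} (f(k+2j) - f(k+2j+2))` intertwines `Δ_ℤ` on bounded functions with
`f(-1) = f(1)` and this recurrence, and maps `δ₀` to the profile of `δ_y`; so the formula holds
for every polynomial `P(𝓛_{T_q})`, with `k_{P(Δ_ℤ)}` in place of `k_{F(Δ_ℤ)}`.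

Since `k_{P(Δ_ℤ)}(n) = (2π)⁻¹ ∫ P(1 - cos θ) cos(nθ) dθ`, we get
`‖k_{P(Δ_ℤ)}‖_∞ ≤ sup_{[0,2]} |P|`. Hence, for polynomials `P → F` uniformly on `[0,2]`, the
kernels `k_{P(Δ_ℤ)}` converge uniformly to `k_{F(Δ_ℤ)}` while `P(𝓛_{T_q}) δ_y` converges pointwise
to `F(𝓛_{T_q}) δ_y` (from convergence in `L²`); and `E` is bounded on `ℓ^∞` for `q ≥ 2`.
-/

namespace Flow

namespace RootedTree

variable {T : Type*} (t : RootedTree T)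

noncomputable def stepsToMeet (x y : T) : ℕ :=
  sInf {k | ∃ l, t.pred^[k] x = t.pred^[l] y}

variable {t}

lemma exists_iterate_stepsToMeet (x y : T) :
    ∃ l, t.pred^[t.stepsToMeet x y] x = t.pred^[l] y :=
  Nat.sInf_mem (t.connected x y)

lemma stepsToMeet_le {x y : T} {k l : ℕ} (h : t.pred^[k] x = t.pred^[l] y) :
    t.stepsToMeet x y ≤ k :=
  Nat.sInf_le ⟨l, h⟩

lemma exists_iterate_of_le {x y : T} {k l k' : ℕ} (h : t.pred^[k] x = t.pred^[l] y)
    (hk : k ≤ k') : ∃ l', t.pred^[k'] x = t.pred^[l'] y := by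
  obtain ⟨n, rfl⟩ := Nat.exists_eq_add_of_le hk
  exact ⟨n + l, by rw [add_comm k, Function.iterate_add_apply, h, ← Function.iterate_add_apply]⟩

lemma stepsToMeet_pred (x y : T) :
    t.stepsToMeet (t.pred x) y = t.stepsToMeet x y - 1 := by
  obtain ⟨l, hl⟩ := t.exists_iterate_stepsToMeet x y
  obtain ⟨l', hl'⟩ := t.exists_iterate_stepsToMeet (t.pred x) y
  obtain ⟨l'', hl''⟩ := exists_iterate_of_le hl (k' := t.stepsToMeet x y - 1 + 1) (by omega)
  rw [Function.iterate_succ_apply] at hl''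
  rw [← Function.iterate_succ_apply] at hl'
  have := stepsToMeet_le hl'
  have := stepsToMeet_le hl''
  omega

lemma stepsToMeet_eq_zero_iff {x y : T} : t.stepsToMeet x y = 0 ↔ t.le y x := by
  constructor
  · intro h
    obtain ⟨l, hl⟩ := t.exists_iterate_stepsToMeet x y
    rw [h] at hl
    exact ⟨l, hl.symm⟩
  · rintro ⟨l, hl⟩
    exact Nat.eq_zero_of_le_zero (stepsToMeet_le (k := 0) hl.symm)

section Level

variable {lev : T → ℤ} (hlev : IsLevel t lev)
include hlev

lemma level_iterate (x : T) (k : ℕ) : lev (t.pred^[k] x) = lev x + k := by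
  induction k with
  | zero => simp
  | succ k ih => rw [Function.iterate_succ_apply', hlev, ih]; push_cast; ring

lemma level_add_eq {x y : T} {k l : ℕ} (h : t.pred^[k] x = t.pred^[l] y) :
    lev x + k = lev y + l := by
  rw [← level_iterate hlev, h, level_iterate hlev]

lemma dist_eq_stepsToMeet (x y : T) :
    (t.dist x y : ℤ) = 2 * t.stepsToMeet x y + lev x - lev y := by
  obtain ⟨l, hl⟩ := t.exists_iterate_stepsToMeet x y
  have hl_lev := level_add_eq hlev hl
  have hle : t.dist x y ≤ t.stepsToMeet x y + l := Nat.sInf_le ⟨_, l, rfl, hl⟩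
  have hge : t.stepsToMeet x y + l ≤ t.dist x y := by
    refine le_csInf ⟨_, _, l, rfl, hl⟩ ?_
    rintro n ⟨k, l', rfl, h⟩
    have := stepsToMeet_le h
    have := level_add_eq hlev h
    omega
  omega

lemma dist_eq_zero_iff {x y : T} : t.dist x y = 0 ↔ x = y := by
  obtain ⟨l, hl⟩ := t.exists_iterate_stepsToMeet x y
  have hd := dist_eq_stepsToMeet hlev x y
  have hl_lev := level_add_eq hlev hl
  constructor
  · intro h
    obtain ⟨hk, rfl⟩ : t.stepsToMeet x y = 0 ∧ l = 0 := by omega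
    rwa [hk] at hl
  · rintro rfl
    have := stepsToMeet_le (t := t) (x := x) (y := x) (k := 0) (l := 0) rfl
    omega

lemma dist_pred_of_le {x y : T} (h : t.le y x) : t.dist (t.pred x) y = t.dist x y + 1 := by
  have h₀ := stepsToMeet_eq_zero_iff.mpr h
  have h₁ := stepsToMeet_pred (t := t) x y
  have := dist_eq_stepsToMeet hlev x y
  have := dist_eq_stepsToMeet hlev (t.pred x) y
  have := hlev x
  omega

lemma dist_pred_add_one_of_not_le {x y : T} (h : ¬ t.le y x) :
    t.dist (t.pred x) y + 1 = t.dist x y := by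
  have h₀ := mt stepsToMeet_eq_zero_iff.mp h
  have h₁ := stepsToMeet_pred (t := t) x y
  have := dist_eq_stepsToMeet hlev x y
  have := dist_eq_stepsToMeet hlev (t.pred x) y
  have := hlev x
  omega

lemma eq_of_le_of_pred_eq {y z z' : T} (hz : t.le y z) (hz' : t.le y z')
    (h : t.pred z = t.pred z') : z = z' := by
  obtain ⟨l, rfl⟩ := hz
  obtain ⟨l', rfl⟩ := hz'
  have := hlev (t.pred^[l] y)
  have := hlev (t.pred^[l'] y)
  have := level_iterate hlev y l
  have := level_iterate hlev y l'
  obtain rfl : l = l' := by rw [h] at *; omega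
  rfl

lemma not_le_of_pred_eq {x z : T} (hz : t.pred z = x) : ¬ t.le x z := by
  rintro ⟨l, hl⟩
  have := level_iterate hlev x l
  have := hlev z
  rw [hl, hz] at *
  omega

end Level

section Homogeneous

variable {q : ℕ}

lemma tsum_succ_eq_mul (hhom : IsHomogeneous t q) {f : T → ℂ} {x : T} {c : ℂ}
    (h : ∀ z, t.pred z = x → f z = c) :
    ∑' z : {z // t.pred z = x}, f z = q * c := by
  have : Fintype {z // t.pred z = x} := (t.succ_finite x).fintype
  rw [tsum_fintype, Finset.sum_congr rfl fun z _ => h z.1 z.2, Finset.sum_const,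
    Finset.card_univ, ← Nat.card_eq_fintype_card, nsmul_eq_mul]
  exact congrArg (fun n : ℕ => (n : ℂ) * c) (hhom x)

lemma tsum_succ_eq_add_mul (hhom : IsHomogeneous t q) {f : T → ℂ} {x z₀ : T} {c : ℂ}
    (hz₀ : t.pred z₀ = x) (h : ∀ z, t.pred z = x → z ≠ z₀ → f z = c) :
    ∑' z : {z // t.pred z = x}, f z = f z₀ + ((q : ℂ) - 1) * c := by
  classical
  have : Fintype {z // t.pred z = x} := (t.succ_finite x).fintype
  have hcard : Fintype.card {z // t.pred z = x} = q := by
    rw [← Nat.card_eq_fintype_card]; exact hhom x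
  have hf : ∀ z : {z // t.pred z = x}, f z = c + if z = ⟨z₀, hz₀⟩ then f z₀ - c else 0 := by
    rintro ⟨z, hz⟩
    by_cases hzz : z = z₀
    · subst hzz; simp
    · simp [hzz, h z hz hzz]
  rw [tsum_fintype, Finset.sum_congr rfl fun z _ => hf z, Finset.sum_add_distrib,
    Finset.sum_const, Finset.card_univ, hcard, nsmul_eq_mul, Finset.sum_ite_eq']
  simp only [Finset.mem_univ, if_true]
  ring

variable {lev : T → ℤ} (hlev : IsLevel t lev) (hhom : IsHomogeneous t q)
include hlev hhom

lemma dist_pred_add_tsum_succ_self (g : ℕ → ℂ) (x : T) :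
    g (t.dist (t.pred x) x) + ∑' z : {z // t.pred z = x}, g (t.dist z x) = (q + 1) * g 1 := by
  have h₀ : t.dist x x = 0 := (dist_eq_zero_iff hlev).mpr rfl
  have hpred : t.dist (t.pred x) x = 1 := by
    rw [dist_pred_of_le hlev (x := x) (y := x) ⟨0, rfl⟩, h₀]
  have hsucc : ∀ z, t.pred z = x → g (t.dist z x) = g 1 := fun z hz => by
    rw [← dist_pred_add_one_of_not_le hlev (not_le_of_pred_eq hlev hz), hz, h₀]
  rw [hpred, tsum_succ_eq_mul hhom hsucc]
  ring

/-- Of the `q + 1` neighbours of `x ≠ y`, exactly one is closer to `y`: the predecessor if `x`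
is not an ancestor of `y`, and otherwise the successor of `x` on the way to `y`. -/
lemma dist_pred_add_tsum_succ_of_ne (g : ℕ → ℂ) {x y : T} (hxy : x ≠ y) :
    g (t.dist (t.pred x) y) + ∑' z : {z // t.pred z = x}, g (t.dist z y)
      = g (t.dist x y - 1) + q * g (t.dist x y + 1) := by
  have hsucc : ∀ z, t.pred z = x → ¬ t.le y z → g (t.dist z y) = g (t.dist x y + 1) :=
    fun z hz h => by rw [← dist_pred_add_one_of_not_le hlev h, hz]
  by_cases hx : t.le y x
  · obtain ⟨l, rfl⟩ := hx
    obtain ⟨l, rfl⟩ : ∃ l', l = l' + 1 := Nat.exists_eq_add_one.mpr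
      (Nat.pos_of_ne_zero fun h => hxy (by simp [h]))
    have hz₀ : t.pred (t.pred^[l] y) = t.pred^[l + 1] y := (Function.iterate_succ_apply' ..).symm
    have hz₀_le : t.le y (t.pred^[l] y) := ⟨l, rfl⟩
    have hdz₀ := dist_pred_of_le hlev hz₀_le
    rw [hz₀] at hdz₀
    rw [tsum_succ_eq_add_mul hhom hz₀ fun z hz hne => hsucc z hz fun hle =>
        hne (eq_of_le_of_pred_eq hlev hle hz₀_le (hz.trans hz₀.symm)),
      dist_pred_of_le hlev ⟨l + 1, rfl⟩, hdz₀, Nat.add_sub_cancel]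
    ring
  · have hpred := dist_pred_add_one_of_not_le hlev hx
    rw [tsum_succ_eq_mul hhom fun z hz => hsucc z hz fun ⟨l, hl⟩ => hx ⟨l + 1, by
      rw [Function.iterate_succ_apply', hl, hz]⟩, ← hpred, Nat.add_sub_cancel]

end Homogeneous

end RootedTree

section Radial

variable {T : Type*} {t : RootedTree T} {lev : T → ℤ} {q : ℕ}

noncomputable def radialFun (t : RootedTree T) (lev : T → ℤ) (s : ℂ) (y : T) (g : ℕ → ℂ) :
    T → ℂ :=
  fun x => s ^ (lev y - lev x) * g (t.dist x y)

noncomputable def radialLap (s : ℂ) (g : ℕ → ℂ) : ℕ → ℂ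
  | 0 => g 0 - (s + s⁻¹) / 2 * g 1
  | k + 1 => g (k + 1) - (s⁻¹ * g k + s * g (k + 2)) / 2

lemma shiftStarOp_canonicalFlow (hlev : IsLevel t lev) (hq : q ≠ 0) (f : T → ℂ) (x : T) :
    shiftStarOp t (canonicalFlow q lev) f x = (q : ℂ)⁻¹ * ∑' z : {z // t.pred z = x}, f z := by
  have hm : ∀ z, t.pred z = x →
      ((canonicalFlow q lev z : ℝ) : ℂ) = (q : ℂ) ^ lev x * (q : ℂ)⁻¹ := fun z hz => by
    rw [canonicalFlow, ← hz, hlev, zpow_add_one₀ (by exact_mod_cast hq)]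
    push_cast
    field_simp
  rw [shiftStarOp, tsum_congr fun z => by rw [hm z.1 z.2], tsum_mul_right, canonicalFlow]
  push_cast
  field_simp

lemma lapOp_radialFun_apply {s : ℂ} (hs : s * s = q) (hq : q ≠ 0) (hlev : IsLevel t lev)
    (y : T) (g : ℕ → ℂ) (x : T) :
    lapOp t (canonicalFlow q lev) (radialFun t lev s y g) x
      = s ^ (lev y - lev x) * (g (t.dist x y) - s⁻¹ *
          (g (t.dist (t.pred x) y) + ∑' z : {z // t.pred z = x}, g (t.dist z y)) / 2) := by
  have hs0 : s ≠ 0 := left_ne_zero_of_mul (hs ▸ Nat.cast_ne_zero.mpr hq)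
  have hsucc : ∀ z : {z // t.pred z = x}, radialFun t lev s y g z
      = s ^ (lev y - lev x) * s * g (t.dist z y) := fun ⟨z, hz⟩ => by
    subst hz
    rw [radialFun, hlev, sub_add_eq_sub_sub, zpow_sub_one₀ hs0]
    field_simp
  rw [lapOp, shiftStarOp_canonicalFlow hlev hq, tsum_congr hsucc, tsum_mul_left,
    shiftOp, radialFun, radialFun, hlev, show lev y - (lev x + 1) = lev y - lev x - 1 by ring,
    zpow_sub_one₀ hs0, ← hs]
  field_simp

theorem lapOp_radialFun {s : ℂ} (hs : s * s = q) (hq : q ≠ 0) (hlev : IsLevel t lev)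
    (hhom : IsHomogeneous t q) (y : T) (g : ℕ → ℂ) :
    lapOp t (canonicalFlow q lev) (radialFun t lev s y g)
      = radialFun t lev s y (radialLap s g) := by
  have hs0 : s ≠ 0 := left_ne_zero_of_mul (hs ▸ Nat.cast_ne_zero.mpr hq)
  funext x
  rw [lapOp_radialFun_apply hs hq hlev, radialFun]
  congr 1
  by_cases hxy : x = y
  · subst hxy
    rw [RootedTree.dist_pred_add_tsum_succ_self hlev hhom,
      (RootedTree.dist_eq_zero_iff hlev).mpr rfl, radialLap, ← hs]
    field_simp
  · rw [RootedTree.dist_pred_add_tsum_succ_of_ne hlev hhom g hxy]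
    obtain ⟨k, hk⟩ := Nat.exists_eq_add_one.mpr
      (Nat.pos_of_ne_zero (mt (RootedTree.dist_eq_zero_iff hlev).mp hxy))
    rw [hk, radialLap, Nat.add_sub_cancel, ← hs]
    field_simp

end Radial

section Integers

open Real intervalIntegral

lemma lapOp_treeZ_apply (f : ℤ → ℂ) (n : ℤ) :
    lapOp treeZ mZ f n = f n - (f (n + 1) + f (n - 1)) / 2 := by
  have hstar : shiftStarOp treeZ mZ f n = f (n - 1) := by
    have hsub : ∀ m : {m : ℤ // treeZ.pred m = n}, m = ⟨n - 1, sub_add_cancel n 1⟩ :=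
      fun ⟨m, hm⟩ => Subtype.ext (eq_sub_of_add_eq hm)
    rw [shiftStarOp, tsum_eq_single ⟨n - 1, sub_add_cancel n 1⟩ fun m hm => absurd (hsub m) hm]
    simp [mZ]
  rw [lapOp, hstar]
  rfl

noncomputable def cosCoeff (G : ℝ → ℂ) (n : ℤ) : ℂ :=
  (2 * π : ℂ)⁻¹ * ∫ θ in -π..π, G θ * Real.cos (n * θ)

lemma intervalIntegrable_mul_cos {G : ℝ → ℂ} (hG : Continuous G) (c : ℝ) :
    IntervalIntegrable (fun θ => G θ * Real.cos (c * θ)) MeasureTheory.volume (-π) π :=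
  (by fun_prop : Continuous fun θ => G θ * Real.cos (c * θ)).intervalIntegrable _ _

lemma cosCoeff_one : cosCoeff (fun _ => 1) = Set.indicator {0} fun _ => 1 := by
  funext n
  have hint : ∫ θ in -π..π, Real.cos (n * θ) = if n = 0 then 2 * π else 0 := by
    split_ifs with hn
    · simp only [hn, Int.cast_zero, zero_mul, Real.cos_zero, intervalIntegral.integral_const,
        smul_eq_mul, mul_one]
      ring
    · rw [integral_comp_mul_left (fun θ => Real.cos θ) (Int.cast_ne_zero.mpr hn), integral_cos,
        mul_neg, Real.sin_neg, Real.sin_int_mul_pi, neg_zero, sub_zero, smul_zero]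
  simp only [cosCoeff, one_mul, intervalIntegral.integral_ofReal, hint, Set.indicator_apply,
    Set.mem_singleton_iff]
  split_ifs
  · push_cast
    field_simp
  · simp

lemma cosCoeff_neg (G : ℝ → ℂ) (n : ℤ) : cosCoeff G (-n) = cosCoeff G n := by
  simp [cosCoeff, neg_mul, Real.cos_neg]

lemma norm_cosCoeff_le {G : ℝ → ℂ} {C : ℝ} (hG : ∀ θ, ‖G θ‖ ≤ C) (n : ℤ) :
    ‖cosCoeff G n‖ ≤ C := by
  have hbound : ∀ θ ∈ Set.uIoc (-π) π, ‖G θ * Real.cos (n * θ)‖ ≤ C := fun θ _ => by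
    rw [norm_mul, Complex.norm_real, Real.norm_eq_abs]
    exact (mul_le_of_le_one_right (norm_nonneg _) (abs_cos_le_one _)).trans (hG θ)
  have := norm_integral_le_of_norm_le_const hbound
  rw [show |π - -π| = 2 * π by rw [abs_of_pos (by linarith [pi_pos])]; ring] at this
  rw [cosCoeff, norm_mul, norm_inv, show ((2 * π : ℂ)) = ((2 * π : ℝ) : ℂ) by push_cast; rfl,
    Complex.norm_real, Real.norm_eq_abs, abs_of_pos (by positivity)]
  rw [inv_mul_le_iff₀ (by positivity)]
  linarith

lemma cosCoeff_sub {G H : ℝ → ℂ} (hG : Continuous G) (hH : Continuous H) (n : ℤ) :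
    cosCoeff (fun θ => G θ - H θ) n = cosCoeff G n - cosCoeff H n := by
  simp only [cosCoeff, sub_mul]
  rw [integral_sub (intervalIntegrable_mul_cos hG _) (intervalIntegrable_mul_cos hH _), mul_sub]

lemma cosCoeff_finset_sum {ι : Type*} (s : Finset ι) (c : ι → ℂ) {G : ι → ℝ → ℂ}
    (hG : ∀ i, Continuous (G i)) (n : ℤ) :
    cosCoeff (fun θ => ∑ i ∈ s, c i * G i θ) n = ∑ i ∈ s, c i * cosCoeff (G i) n := by
  simp only [cosCoeff, Finset.sum_mul, mul_assoc]
  rw [integral_finsetSum fun i _ => (intervalIntegrable_mul_cos (hG i) _).const_mul (c i),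
    Finset.mul_sum]
  refine Finset.sum_congr rfl fun i _ => ?_
  rw [intervalIntegral.integral_const_mul]
  ring

lemma lapOp_treeZ_cosCoeff {G : ℝ → ℂ} (hG : Continuous G) :
    lapOp treeZ mZ (cosCoeff G) = cosCoeff fun θ => ((1 - Real.cos θ : ℝ) : ℂ) * G θ := by
  funext n
  have hcos : ∀ θ, ((1 - Real.cos θ : ℝ) : ℂ) * G θ * Real.cos (n * θ)
      = G θ * Real.cos (n * θ)
        - (G θ * Real.cos (((n + 1 : ℤ) : ℝ) * θ) + G θ * Real.cos (((n - 1 : ℤ) : ℝ) * θ)) / 2 :=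
    fun θ => by
      have h₁ : Real.cos (((n + 1 : ℤ) : ℝ) * θ)
          = Real.cos (n * θ) * Real.cos θ - Real.sin (n * θ) * Real.sin θ := by
        rw [← Real.cos_add]; push_cast; ring_nf
      have h₂ : Real.cos (((n - 1 : ℤ) : ℝ) * θ)
          = Real.cos (n * θ) * Real.cos θ + Real.sin (n * θ) * Real.sin θ := by
        rw [← Real.cos_sub]; push_cast; ring_nf
      rw [h₁, h₂]
      push_cast
      ring
  rw [lapOp_treeZ_apply, cosCoeff, cosCoeff, cosCoeff, cosCoeff, integral_congr fun θ _ => hcos θ,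
    integral_sub (intervalIntegrable_mul_cos hG _)
      (((intervalIntegrable_mul_cos hG _).add (intervalIntegrable_mul_cos hG _)).div_const 2),
    intervalIntegral.integral_div,
    integral_add (intervalIntegrable_mul_cos hG _) (intervalIntegrable_mul_cos hG _)]
  ring

lemma iterate_lapOp_treeZ_indicator (i : ℕ) :
    (lapOp treeZ mZ)^[i] (Set.indicator {0} fun _ => 1)
      = cosCoeff fun θ => ((1 - Real.cos θ : ℝ) : ℂ) ^ i := by
  induction i with
  | zero => simpa using cosCoeff_one.symm
  | succ i ih =>
    rw [Function.iterate_succ_apply', ih, lapOp_treeZ_cosCoeff (by fun_prop)]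
    simp only [pow_succ']

lemma polyApply_lapOp_treeZ_indicator (P : Polynomial ℂ) :
    polyApply (lapOp treeZ mZ) P (Set.indicator {0} fun _ => 1)
      = cosCoeff fun θ => P.eval ((1 - Real.cos θ : ℝ) : ℂ) := by
  funext n
  simp only [polyApply, iterate_lapOp_treeZ_indicator, Polynomial.eval_eq_sum_range]
  exact (cosCoeff_finset_sum _ _ (fun i => by fun_prop) n).symm

lemma norm_polyApply_lapOp_treeZ_indicator_sub_le {P P' : Polynomial ℂ} {C : ℝ}
    (h : ∀ lam ∈ Set.Icc (0 : ℝ) 2, ‖P.eval (lam : ℂ) - P'.eval (lam : ℂ)‖ ≤ C) (n : ℤ) :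
    ‖polyApply (lapOp treeZ mZ) P (Set.indicator {0} fun _ => 1) n
      - polyApply (lapOp treeZ mZ) P' (Set.indicator {0} fun _ => 1) n‖ ≤ C := by
  rw [polyApply_lapOp_treeZ_indicator, polyApply_lapOp_treeZ_indicator,
    ← cosCoeff_sub (by fun_prop) (by fun_prop)]
  exact norm_cosCoeff_le (fun θ => h _ ⟨by linarith [Real.cos_le_one θ],
    by linarith [Real.neg_one_le_cos θ]⟩) n

end Integers

section InverseAbel

noncomputable def invAbelTerm (q : ℕ) (f : ℤ → ℂ) (k j : ℕ) : ℂ :=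
  ((q : ℝ) ^ (-(((k : ℝ) + 2 * (j : ℝ)) / 2)) : ℝ) •
    (f ((k : ℤ) + 2 * (j : ℤ)) - f ((k : ℤ) + 2 * (j : ℤ) + 2))

/-- The inverse Abel transform of the homogeneous tree `T_q`. -/
noncomputable def invAbel (q : ℕ) (f : ℤ → ℂ) (k : ℕ) : ℂ :=
  ∑' j, invAbelTerm q f k j

lemma natCast_rpow_neg_div_two (q : ℕ) (n : ℤ) :
    (((q : ℝ) ^ (-((n : ℝ) / 2)) : ℝ) : ℂ) = (√(q : ℝ) : ℂ) ^ (-n) := by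
  rw [← Complex.ofReal_zpow, Real.sqrt_eq_rpow, ← Real.rpow_intCast,
    ← Real.rpow_mul (Nat.cast_nonneg q)]
  push_cast
  ring_nf

lemma sqrt_natCast_mul_self (q : ℕ) : (√(q : ℝ) : ℂ) * √(q : ℝ) = q := by
  rw [← Complex.ofReal_mul, Real.mul_self_sqrt (Nat.cast_nonneg q), Complex.ofReal_natCast]

variable {q : ℕ}

lemma invAbelTerm_eq (f : ℤ → ℂ) (k j : ℕ) :
    invAbelTerm q f k j = ((√(q : ℝ) : ℂ)⁻¹) ^ (k + 2 * j)
      * (f ((k : ℤ) + 2 * (j : ℤ)) - f ((k : ℤ) + 2 * (j : ℤ) + 2)) := by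
  rw [invAbelTerm, Complex.real_smul, show ((k : ℝ) + 2 * (j : ℝ)) = ((k + 2 * j : ℕ) : ℤ) by
    push_cast; ring, natCast_rpow_neg_div_two, zpow_neg, zpow_natCast, inv_pow]

lemma norm_invAbelTerm_le (hq : 0 < q) {f : ℤ → ℂ} {C : ℝ} (hf : ∀ n, ‖f n‖ ≤ C) (k j : ℕ) :
    ‖invAbelTerm q f k j‖ ≤ (q : ℝ)⁻¹ ^ j * (2 * C) := by
  have hs : 1 ≤ √(q : ℝ) := Real.one_le_sqrt.mpr (by exact_mod_cast hq)
  rw [invAbelTerm_eq, norm_mul, norm_pow, norm_inv, Complex.norm_real, Real.norm_eq_abs,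
    abs_of_nonneg (Real.sqrt_nonneg _), pow_add, pow_mul, inv_pow _ 2,
    Real.sq_sqrt (Nat.cast_nonneg q)]
  have hdiff := (norm_sub_le _ _).trans
    (add_le_add (hf ((k : ℤ) + 2 * j)) (hf ((k : ℤ) + 2 * j + 2)))
  have hk : (√(q : ℝ))⁻¹ ^ k ≤ 1 := pow_le_one₀ (by positivity) (inv_le_one_of_one_le₀ hs)
  calc (√(q : ℝ))⁻¹ ^ k * (q : ℝ)⁻¹ ^ j * ‖_‖ ≤ 1 * (q : ℝ)⁻¹ ^ j * (C + C) := by gcongr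
    _ = (q : ℝ)⁻¹ ^ j * (2 * C) := by ring

lemma summable_invAbelTerm (hq : 1 < q) {f : ℤ → ℂ} {C : ℝ} (hf : ∀ n, ‖f n‖ ≤ C) (k : ℕ) :
    Summable (invAbelTerm q f k) :=
  Summable.of_norm_bounded ((summable_geometric_of_lt_one (by positivity)
    (inv_lt_one_of_one_lt₀ (by exact_mod_cast hq))).mul_right _)
    (norm_invAbelTerm_le (by omega) hf k)

lemma hasSum_invAbel (hq : 1 < q) {f : ℤ → ℂ} {C : ℝ} (hf : ∀ n, ‖f n‖ ≤ C) (k : ℕ) :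
    HasSum (invAbelTerm q f k) (invAbel q f k) :=
  (summable_invAbelTerm hq hf k).hasSum

lemma norm_invAbel_le (hq : 1 < q) {f : ℤ → ℂ} {C : ℝ} (hf : ∀ n, ‖f n‖ ≤ C) (k : ℕ) :
    ‖invAbel q f k‖ ≤ 4 * C := by
  have hq2 : (q : ℝ)⁻¹ ≤ 2⁻¹ := inv_anti₀ two_pos (by exact_mod_cast hq)
  have hbound : ∀ j, ‖invAbelTerm q f k j‖ ≤ (2 : ℝ)⁻¹ ^ j * (2 * C) := fun j =>
    (norm_invAbelTerm_le (by omega) hf k j).trans (by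
      have : 0 ≤ C := (norm_nonneg _).trans (hf 0)
      gcongr)
  have hgeom := summable_geometric_two.mul_right (2 * C)
  calc ‖invAbel q f k‖ ≤ ∑' j, (2 : ℝ)⁻¹ ^ j * (2 * C) :=
        tsum_of_norm_bounded (hgeom.congr fun j => by simp [one_div]).hasSum hbound
    _ = 4 * C := by rw [tsum_mul_right, tsum_geometric_inv_two]; ring

lemma invAbel_sub (hq : 1 < q) {f g : ℤ → ℂ} {C D : ℝ} (hf : ∀ n, ‖f n‖ ≤ C)
    (hg : ∀ n, ‖g n‖ ≤ D) (k : ℕ) :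
    invAbel q f k - invAbel q g k = invAbel q (fun n => f n - g n) k := by
  refine ((hasSum_invAbel hq hf k).sub (hasSum_invAbel hq hg k)).tsum_eq.symm.trans
    (tsum_congr fun j => ?_)
  simp only [invAbelTerm, ← smul_sub]
  ring_nf

lemma invAbel_finset_sum (hq : 1 < q) {ι : Type*} (s : Finset ι) (c : ι → ℂ) {f : ι → ℤ → ℂ}
    {C : ι → ℝ} (hf : ∀ i n, ‖f i n‖ ≤ C i) (k : ℕ) :
    invAbel q (fun n => ∑ i ∈ s, c i * f i n) k = ∑ i ∈ s, c i * invAbel q (f i) k := by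
  refine (tsum_congr fun j => ?_).trans
    (hasSum_sum fun i _ => (hasSum_invAbel hq (hf i) k).mul_left (c i)).tsum_eq
  simp only [invAbelTerm, ← Finset.sum_sub_distrib, Finset.smul_sum, ← mul_sub, mul_smul_comm]

lemma invAbel_shift_succ (hq : q ≠ 0) (f : ℤ → ℂ) (k : ℕ) :
    invAbel q (fun n => f (n + 1)) k = √(q : ℝ) * invAbel q f (k + 1) := by
  rw [invAbel, invAbel, ← tsum_mul_left]
  refine tsum_congr fun j => ?_
  have hs : (√(q : ℝ) : ℂ) ≠ 0 := by simp [hq]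
  rw [invAbelTerm_eq, invAbelTerm_eq, show k + 1 + 2 * j = k + 2 * j + 1 by ring, pow_succ]
  push_cast
  field_simp
  ring_nf

lemma invAbel_shift_pred_succ (f : ℤ → ℂ) (k : ℕ) :
    invAbel q (fun n => f (n - 1)) (k + 1) = (√(q : ℝ) : ℂ)⁻¹ * invAbel q f k := by
  rw [invAbel, invAbel, ← tsum_mul_left]
  refine tsum_congr fun j => ?_
  rw [invAbelTerm_eq, invAbelTerm_eq, show k + 1 + 2 * j = k + 2 * j + 1 by ring, pow_succ]
  push_cast
  ring_nf

lemma invAbel_shift_pred_zero (hq : 1 < q) {f : ℤ → ℂ} {C : ℝ} (hf : ∀ n, ‖f n‖ ≤ C)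
    (heven : f (-1) = f 1) :
    invAbel q (fun n => f (n - 1)) 0 = (√(q : ℝ) : ℂ)⁻¹ * invAbel q f 1 := by
  have hf' : ∀ n, ‖f (n - 1)‖ ≤ C := fun n => hf (n - 1)
  rw [invAbel, (summable_invAbelTerm hq hf' 0).tsum_eq_zero_add, invAbel, ← tsum_mul_left]
  have h₀ : invAbelTerm q (fun n => f (n - 1)) 0 0 = 0 := by
    simp [invAbelTerm, heven]
  rw [h₀, zero_add]
  refine tsum_congr fun j => ?_
  rw [invAbelTerm_eq, invAbelTerm_eq, show 0 + 2 * (j + 1) = 1 + 2 * j + 1 by ring, pow_succ]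
  push_cast
  ring_nf

theorem invAbel_lapOp_treeZ (hq : 1 < q) {f : ℤ → ℂ} {C : ℝ} (hf : ∀ n, ‖f n‖ ≤ C)
    (heven : f (-1) = f 1) :
    invAbel q (lapOp treeZ mZ f) = radialLap √(q : ℝ) (invAbel q f) := by
  have hsplit : ∀ k, invAbel q (lapOp treeZ mZ f) k = invAbel q f k
      - (invAbel q (fun n => f (n + 1)) k + invAbel q (fun n => f (n - 1)) k) / 2 := fun k => by
    refine (tsum_congr fun j => ?_).trans ((hasSum_invAbel hq hf k).sub
      (((hasSum_invAbel hq (fun n => hf (n + 1)) k).add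
        (hasSum_invAbel hq (fun n => hf (n - 1)) k)).div_const 2)).tsum_eq
    simp only [invAbelTerm, lapOp_treeZ_apply, Complex.real_smul]
    ring_nf
  funext k
  rcases k with _ | k
  · rw [hsplit, invAbel_shift_succ (by omega), invAbel_shift_pred_zero hq hf heven, radialLap]
    ring
  · rw [hsplit, invAbel_shift_succ (by omega), invAbel_shift_pred_succ, radialLap]
    ring

lemma invAbel_indicator_zero :
    invAbel q (Set.indicator {0} fun _ => 1) = fun k => if k = 0 then 1 else 0 := by
  have hterm : ∀ k j, k + j ≠ 0 → invAbelTerm q (Set.indicator {0} fun _ => 1) k j = 0 :=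
    fun k j h => by
      simp only [invAbelTerm, Set.indicator_apply, Set.mem_singleton_iff]
      rw [if_neg (by omega), if_neg (by omega), sub_zero, smul_zero]
  funext k
  rw [invAbel, tsum_eq_single 0 fun j hj => hterm k j (by omega)]
  rcases k with _ | k
  · simp [invAbelTerm]
  · exact hterm _ 0 (by omega)

variable {T : Type*} {t : RootedTree T} {lev : T → ℤ}

lemma radialFun_indicator_zero (hlev : IsLevel t lev) (s : ℂ) (y : T) :
    radialFun t lev s y (fun k => if k = 0 then 1 else 0) = Set.indicator {y} fun _ => 1 := by
  funext x
  by_cases hxy : x = y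
  · subst hxy
    simp [radialFun, (RootedTree.dist_eq_zero_iff hlev).mpr rfl]
  · simp [radialFun, hxy, mt (RootedTree.dist_eq_zero_iff hlev).mp hxy]

theorem polyApply_lapOp_indicator (hq : 1 < q) (hlev : IsLevel t lev) (hhom : IsHomogeneous t q)
    (P : Polynomial ℂ) (y x : T) :
    polyApply (lapOp t (canonicalFlow q lev)) P (Set.indicator {y} fun _ => 1) x
      = (√(q : ℝ) : ℂ) ^ (lev y - lev x)
        * invAbel q (polyApply (lapOp treeZ mZ) P (Set.indicator {0} fun _ => 1)) (t.dist x y) := by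
  have hs : (√(q : ℝ) : ℂ) * √(q : ℝ) = q := sqrt_natCast_mul_self q
  have hbound : ∀ i n, ‖(lapOp treeZ mZ)^[i] (Set.indicator {0} fun _ => 1) n‖ ≤ 2 ^ i :=
    fun i n => by
      rw [iterate_lapOp_treeZ_indicator]
      refine norm_cosCoeff_le (fun θ => ?_) n
      rw [norm_pow, Complex.norm_real, Real.norm_eq_abs]
      exact pow_le_pow_left₀ (abs_nonneg _) (abs_le.mpr ⟨by linarith [Real.cos_le_one θ],
        by linarith [Real.neg_one_le_cos θ]⟩) i
  have hiter : ∀ i, (lapOp t (canonicalFlow q lev))^[i] (Set.indicator {y} fun _ => 1)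
      = radialFun t lev √(q : ℝ) y
          (invAbel q ((lapOp treeZ mZ)^[i] (Set.indicator {0} fun _ => 1))) := by
    intro i
    induction i with
    | zero => rw [Function.iterate_zero_apply, Function.iterate_zero_apply, invAbel_indicator_zero,
        radialFun_indicator_zero hlev]
    | succ i ih =>
      rw [Function.iterate_succ_apply', ih, lapOp_radialFun hs (by omega) hlev hhom,
        Function.iterate_succ_apply', invAbel_lapOp_treeZ hq (hbound i) (by
          rw [iterate_lapOp_treeZ_indicator, ← cosCoeff_neg, neg_neg])]
  unfold polyApply
  rw [invAbel_finset_sum hq _ _ hbound, Finset.mul_sum]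
  simp only [hiter, radialFun]
  exact Finset.sum_congr rfl fun i _ => by ring

end InverseAbel

section Approximation

variable {T : Type*}

lemma lpNorm_two_eq (m : T → ℝ) (f : T → ℂ) :
    lpNorm m 2 f = (∑' x, (‖f x‖₊ : ℝ≥0∞) ^ (2 : ℝ) * ENNReal.ofReal (m x)) ^ (1 / 2 : ℝ) := by
  rw [lpNorm, if_neg (by simp)]
  norm_num

lemma nnnorm_mul_le_lpNorm_two (m : T → ℝ) (f : T → ℂ) (x : T) :
    (‖f x‖₊ : ℝ≥0∞) * ENNReal.ofReal (m x) ^ (1 / 2 : ℝ) ≤ lpNorm m 2 f := by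
  rw [lpNorm_two_eq]
  refine le_trans (le_of_eq ?_) (ENNReal.rpow_le_rpow (ENNReal.le_tsum x) (by norm_num))
  rw [ENNReal.mul_rpow_of_nonneg _ _ (by norm_num), ← ENNReal.rpow_mul]
  norm_num

lemma lpNorm_two_indicator (m : T → ℝ) (y : T) :
    lpNorm m 2 (Set.indicator {y} fun _ => 1) = ENNReal.ofReal (m y) ^ (1 / 2 : ℝ) := by
  rw [lpNorm_two_eq, tsum_eq_single y fun x hx => by simp [hx]]
  simp

theorem IsCfcOf.exists_polyApply_indicator_approx {m : T → ℝ} (hm : ∀ x, 0 < m x)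
    {L : (T → ℂ) → (T → ℂ)} {F : ℝ → ℂ} {B : (T → ℂ) → (T → ℂ)} (hB : IsCfcOf m L F B)
    {ε : ℝ} (hε : 0 < ε) :
    ∃ P : Polynomial ℂ, (∀ lam ∈ Set.Icc (0 : ℝ) 2, ‖F lam - P.eval (lam : ℂ)‖ ≤ ε) ∧
      ∀ x y, ‖B (Set.indicator {y} fun _ => 1) x
        - polyApply L P (Set.indicator {y} fun _ => 1) x‖ ≤ ε * √(m y) / √(m x) := by
  obtain ⟨P, hPF, hPB⟩ := hB ε hε
  refine ⟨P, hPF, fun x y => ?_⟩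
  have h := (nnnorm_mul_le_lpNorm_two m _ x).trans (hPB (Set.indicator {y} fun _ => 1) (by
    rw [lpNorm_two_indicator]
    exact ENNReal.rpow_lt_top_of_nonneg (by norm_num) ENNReal.ofReal_ne_top))
  rw [lpNorm_two_indicator, ENNReal.ofReal_rpow_of_nonneg (hm x).le (by norm_num),
    ENNReal.ofReal_rpow_of_nonneg (hm y).le (by norm_num), ← Real.sqrt_eq_rpow,
    ← Real.sqrt_eq_rpow, ← enorm_eq_nnnorm, ← ofReal_norm, ← ENNReal.ofReal_mul (norm_nonneg _),
    ← ENNReal.ofReal_mul hε.le, ENNReal.ofReal_le_ofReal_iff (by positivity)] at h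
  rwa [le_div_iff₀ (Real.sqrt_pos.mpr (hm x))]

lemma exists_bound_polyApply_lapOp_treeZ_indicator (P : Polynomial ℂ) :
    ∃ C, ∀ n, ‖polyApply (lapOp treeZ mZ) P (Set.indicator {0} fun _ => 1) n‖ ≤ C := by
  obtain ⟨C, hC⟩ := isCompact_Icc.exists_bound_of_continuousOn
    (s := Set.Icc (0 : ℝ) 2) (f := fun lam : ℝ => P.eval (lam : ℂ)) (by fun_prop)
  refine ⟨C, fun n => ?_⟩
  rw [polyApply_lapOp_treeZ_indicator]
  exact norm_cosCoeff_le (fun θ => hC _ ⟨by linarith [Real.cos_le_one θ],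
    by linarith [Real.neg_one_le_cos θ]⟩) n

variable {F : ℝ → ℂ} {BZ : (ℤ → ℂ) → (ℤ → ℂ)}

lemma IsCfcOf.norm_kZker_sub_polyApply_le (hBZ : IsCfcOf mZ (lapOp treeZ mZ) F BZ)
    {P : Polynomial ℂ} {ε : ℝ} (hε : 0 < ε)
    (hP : ∀ lam ∈ Set.Icc (0 : ℝ) 2, ‖F lam - P.eval (lam : ℂ)‖ ≤ ε) (n : ℤ) :
    ‖kZker BZ n - polyApply (lapOp treeZ mZ) P (Set.indicator {0} fun _ => 1) n‖ ≤ 3 * ε := by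
  obtain ⟨P', hP'F, hP'B⟩ := hBZ.exists_polyApply_indicator_approx (fun _ => one_pos) hε
  have hZ : ‖kZker BZ n - polyApply (lapOp treeZ mZ) P' (Set.indicator {0} fun _ => 1) n‖ ≤ ε := by
    simpa [mZ, kZker] using hP'B n 0
  have hPP' := norm_polyApply_lapOp_treeZ_indicator_sub_le (P := P') (P' := P) (C := 2 * ε)
    (fun lam hlam => by
      rw [← sub_sub_sub_cancel_left _ _ (F lam), two_mul]
      exact (norm_sub_le _ _).trans (add_le_add (hP lam hlam) (hP'F lam hlam))) n
  calc _ ≤ _ := norm_sub_le_norm_sub_add_norm_sub _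
        (polyApply (lapOp treeZ mZ) P' (Set.indicator {0} fun _ => 1) n) _
    _ ≤ ε + 2 * ε := add_le_add hZ hPP'
    _ = 3 * ε := by ring

lemma IsCfcOf.exists_bound_kZker (hBZ : IsCfcOf mZ (lapOp treeZ mZ) F BZ) :
    ∃ C, ∀ n, ‖kZker BZ n‖ ≤ C := by
  obtain ⟨P, hPF, -⟩ := hBZ 1 one_pos
  obtain ⟨C, hC⟩ := exists_bound_polyApply_lapOp_treeZ_indicator P
  refine ⟨3 + C, fun n => ?_⟩
  have hK := hBZ.norm_kZker_sub_polyApply_le one_pos hPF n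
  calc ‖kZker BZ n‖ ≤ _ := norm_le_norm_sub_add _
        (polyApply (lapOp treeZ mZ) P (Set.indicator {0} fun _ => 1) n)
    _ ≤ 3 + C := by linarith [hC n, hK]

lemma eq_of_forall_norm_sub_le_mul {E : Type*} [NormedAddCommGroup E] {a b : E} {c : ℝ}
    (h : ∀ ε > 0, ‖a - b‖ ≤ c * ε) : a = b := by
  have hlim : Tendsto (fun ε => c * ε) (nhdsWithin 0 (Set.Ioi 0)) (nhds 0) := by
    simpa using ((continuous_const_mul c).tendsto 0).mono_left nhdsWithin_le_nhds
  exact sub_eq_zero.mp (norm_le_zero_iff.mp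
    (ge_of_tendsto hlim (eventually_nhdsWithin_of_forall h)))

variable {t : RootedTree T} {lev : T → ℤ} {q : ℕ} {B : (T → ℂ) → (T → ℂ)}

theorem IsCfcOf.apply_indicator_eq_invAbel_kZker (hq : 1 < q) (hlev : IsLevel t lev)
    (hhom : IsHomogeneous t q)
    (hB : IsCfcOf (canonicalFlow q lev) (lapOp t (canonicalFlow q lev)) F B)
    (hBZ : IsCfcOf mZ (lapOp treeZ mZ) F BZ) (x y : T) :
    B (Set.indicator {y} fun _ => 1) x
      = (√(q : ℝ) : ℂ) ^ (lev y - lev x) * invAbel q (kZker BZ) (t.dist x y) := by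
  set m := canonicalFlow q lev
  set w : ℂ := (√(q : ℝ) : ℂ) ^ (lev y - lev x) with hw
  have hm : ∀ x, 0 < m x := fun x => zpow_pos (by exact_mod_cast (by omega : 0 < q)) _
  obtain ⟨C, hC⟩ := hBZ.exists_bound_kZker
  refine eq_of_forall_norm_sub_le_mul (c := √(m y) / √(m x) + ‖w‖ * 12) fun ε hε => ?_
  obtain ⟨P, hPF, hPB⟩ := hB.exists_polyApply_indicator_approx hm hε
  obtain ⟨CP, hCP⟩ := exists_bound_polyApply_lapOp_treeZ_indicator P
  have hinv := norm_invAbel_le hq (hBZ.norm_kZker_sub_polyApply_le hε hPF) (t.dist x y)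
  rw [← invAbel_sub hq hC hCP] at hinv
  calc ‖B (Set.indicator {y} fun _ => 1) x - w * invAbel q (kZker BZ) (t.dist x y)‖
      = ‖(B (Set.indicator {y} fun _ => 1) x
            - polyApply (lapOp t m) P (Set.indicator {y} fun _ => 1) x)
          - w * (invAbel q (kZker BZ) (t.dist x y) - invAbel q
            (polyApply (lapOp treeZ mZ) P (Set.indicator {0} fun _ => 1)) (t.dist x y))‖ := by
        rw [polyApply_lapOp_indicator hq hlev hhom, ← hw]
        congr 1
        ring
    _ ≤ ε * √(m y) / √(m x) + ‖w‖ * (4 * (3 * ε)) := by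
        refine (norm_sub_le _ _).trans (add_le_add (hPB x y) ?_)
        rw [norm_mul]
        exact mul_le_mul_of_nonneg_left hinv (norm_nonneg _)
    _ = (√(m y) / √(m x) + ‖w‖ * 12) * ε := by ring

end Approximation

end Flow

theorem homogeneous_tree_kernel_formula_general {Tq : Type*}
    (q : ℕ) (hq : 2 ≤ q)
    (tq : Flow.RootedTree Tq) (hhom : Flow.IsHomogeneous tq q)
    (lev : Tq → ℤ) (hlev : Flow.IsLevel tq lev)
    (F : ℝ → ℂ)
    (B : (Tq → ℂ) → (Tq → ℂ))
    (hB : Flow.IsCfcOf (Flow.canonicalFlow q lev)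
      (Flow.lapOp tq (Flow.canonicalFlow q lev)) F B)
    (BZ : (ℤ → ℂ) → (ℤ → ℂ))
    (hBZ : Flow.IsCfcOf Flow.mZ (Flow.lapOp Flow.treeZ Flow.mZ) F BZ) :
    ∀ x y : Tq,
      Summable (fun j : ℕ =>
        ((q : ℝ) ^ (-(((tq.dist x y : ℝ) + 2 * (j : ℝ)) / 2)) : ℝ) •
          (Flow.kZker BZ ((tq.dist x y : ℤ) + 2 * (j : ℤ))
            - Flow.kZker BZ ((tq.dist x y : ℤ) + 2 * (j : ℤ) + 2))) ∧
      Flow.opKernel (Flow.canonicalFlow q lev) B x y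
        = ((q : ℝ) ^ (-((((lev x + lev y : ℤ) : ℝ)) / 2)) : ℝ) •
          ∑' j : ℕ,
            ((q : ℝ) ^ (-(((tq.dist x y : ℝ) + 2 * (j : ℝ)) / 2)) : ℝ) •
              (Flow.kZker BZ ((tq.dist x y : ℤ) + 2 * (j : ℤ))
                - Flow.kZker BZ ((tq.dist x y : ℤ) + 2 * (j : ℤ) + 2)) := by
  intro x y
  obtain ⟨C, hC⟩ := hBZ.exists_bound_kZker
  refine ⟨Flow.summable_invAbelTerm hq hC _, ?_⟩
  have hs : (√(q : ℝ) : ℂ) ≠ 0 :=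
    Complex.ofReal_ne_zero.mpr (Real.sqrt_ne_zero'.mpr (by exact_mod_cast (by omega : 0 < q)))
  change B _ x / _ = _ • Flow.invAbel q (Flow.kZker BZ) (tq.dist x y)
  rw [hB.apply_indicator_eq_invAbel_kZker hq hlev hhom hBZ, Complex.real_smul,
    Flow.natCast_rpow_neg_div_two, Flow.canonicalFlow, Complex.ofReal_zpow, Complex.ofReal_natCast,
    ← Flow.sqrt_natCast_mul_self, mul_zpow, zpow_neg, zpow_add₀ hs, zpow_sub₀ hs]
  field_simp

/-- Kernel formula on the homogeneous tree `T_q` (`q ≥ 2`): for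
`F ∈ C([0,2])` and all `x, y ∈ T_q`,
`K_{F(𝓛_{T_q})}(x,y) = q^{-(ℓ(x)+ℓ(y))/2} E_F(d(x,y))`, where
`E_F(k) = Σ_{j≥0} q^{-(k+2j)/2} (k_{F(Δ_ℤ)}(k+2j) - k_{F(Δ_ℤ)}(k+2j+2))`,
the series converging absolutely; here `Δ_ℤ` is realised as the flow Laplacian of the
flow tree `(ℤ, 1)` and `k_{F(Δ_ℤ)} = F(Δ_ℤ)δ₀`. -/
theorem homogeneous_tree_kernel_formula {Tq : Type*} [Nonempty Tq]
    (q : ℕ) (hq : 2 ≤ q)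
    (tq : Flow.RootedTree Tq) (hhom : Flow.IsHomogeneous tq q)
    (lev : Tq → ℤ) (hlev : Flow.IsLevel tq lev)
    (F : ℝ → ℂ) (hF : ContinuousOn F (Set.Icc (0 : ℝ) 2))
    (B : (Tq → ℂ) → (Tq → ℂ))
    (hB : Flow.IsCfcOf (Flow.canonicalFlow q lev)
      (Flow.lapOp tq (Flow.canonicalFlow q lev)) F B)
    (BZ : (ℤ → ℂ) → (ℤ → ℂ))
    (hBZ : Flow.IsCfcOf Flow.mZ (Flow.lapOp Flow.treeZ Flow.mZ) F BZ) :
    ∀ x y : Tq,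
      Summable (fun j : ℕ =>
        ((q : ℝ) ^ (-(((tq.dist x y : ℝ) + 2 * (j : ℝ)) / 2)) : ℝ) •
          (Flow.kZker BZ ((tq.dist x y : ℤ) + 2 * (j : ℤ))
            - Flow.kZker BZ ((tq.dist x y : ℤ) + 2 * (j : ℤ) + 2))) ∧
      Flow.opKernel (Flow.canonicalFlow q lev) B x y
        = ((q : ℝ) ^ (-((((lev x + lev y : ℤ) : ℝ)) / 2)) : ℝ) •
          ∑' j : ℕ,
            ((q : ℝ) ^ (-(((tq.dist x y : ℝ) + 2 * (j : ℝ)) / 2)) : ℝ) •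
              (Flow.kZker BZ ((tq.dist x y : ℤ) + 2 * (j : ℤ))
                - Flow.kZker BZ ((tq.dist x y : ℤ) + 2 * (j : ℤ) + 2)) :=
  homogeneous_tree_kernel_formula_general q hq tq hhom lev hlev F B hB BZ hBZ
end
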